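/- arXiv:1303.6011 — 4 statements merged into one kernel-verified Lean document; each statement's English description precedes it below -/
import Mathlib

section
/- For any polynomial p over a commutative ring and any n×n matrices X and H, evaluating p at the block matrix [[X, H],[0, X]] gives [[p(X), Dp(X)[H]],[0, p(X)]], where Dp(X)[H] = sum over k of a_k * (sum over i+j=k-1 of X^i H X^j) for p = sum a_k x^k. -/
open Matrix Finset

theorem Matrix.fromBlocks_sum {ι l m n o α : Type*} [AddCommMonoid α] (s : Finset ι)
    (A : ι → Matrix n l α) (B : ι → Matrix n m α) (C : ι → Matrix o l α)
    (D : ι → Matrix o m α) :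
    ∑ k ∈ s, fromBlocks (A k) (B k) (C k) (D k) =
      fromBlocks (∑ k ∈ s, A k) (∑ k ∈ s, B k) (∑ k ∈ s, C k) (∑ k ∈ s, D k) := by
  ext (i | i) (j | j) <;> simp [Matrix.sum_apply]

theorem Matrix.fromBlocks_self_zero_self_pow {n α : Type*} [Fintype n] [DecidableEq n]
    [Semiring α] (X H : Matrix n n α) (k : ℕ) :
    fromBlocks X H 0 X ^ k =
      fromBlocks (X ^ k) (∑ i ∈ range k, X ^ i * H * X ^ (k - 1 - i)) 0 (X ^ k) := by
  induction k with
  | zero => simp [fromBlocks_one]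
  | succ k ih =>
    have shift : ∀ i ∈ range k,
        X ^ i * H * X ^ (k - 1 - i) * X = X ^ i * H * X ^ (k + 1 - 1 - i) := fun i hi => by
      rw [mul_assoc, ← pow_succ]
      congr 2
      have := mem_range.1 hi
      omega
    rw [pow_succ, ih, fromBlocks_multiply, sum_range_succ _ k, sum_mul _ _ X, sum_congr rfl shift]
    simp [pow_succ, add_comm]

/-- Evaluating a polynomial `p` at the block matrix `[[X,H],[0,X]]` yields
`[[p(X), Dp(X)[H]],[0,p(X)]]` with `Dp(X)[H] = ∑_k a_k ∑_{i+j=k-1} X^i H X^j`. -/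
theorem polynomial_block_derivative (R : Type) [CommRing R] (n : ℕ) (p : Polynomial R)
    (X H : Matrix (Fin n) (Fin n) R) :
    Polynomial.aeval (Matrix.fromBlocks X H 0 X) p =
      Matrix.fromBlocks (Polynomial.aeval X p)
        (∑ k ∈ Finset.range (p.natDegree + 1),
          p.coeff k • ∑ i ∈ Finset.range k, X ^ i * H * X ^ (k - 1 - i))
        0 (Polynomial.aeval X p) := by
  simp only [Polynomial.aeval_eq_sum_range, fromBlocks_self_zero_self_pow, fromBlocks_smul,
    smul_zero, fromBlocks_sum, sum_const_zero]
end

section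
/- Let f be a function on pairs (tuples) of square matrices of all sizes that preserves direct sums (f(A ⊕ B) = f(A) ⊕ f(B)) and intertwines similarities (f(S⁻¹AS) = S⁻¹f(A)S for all invertible S). If there exist n×n matrices X and H with H ≠ 0 such that f([[X,H],[0,X]]) = [[f(X), 0],[0, f(X)]], then f is not injective. -/
theorem singular_derivative_not_injective_general (K : Type) [Field K]
    (f : ∀ (I : Type) [Fintype I] [DecidableEq I], Matrix I I K → Matrix I I K)
    (hsum : ∀ (I J : Type) [Fintype I] [DecidableEq I] [Fintype J] [DecidableEq J]
      (A : Matrix I I K) (B : Matrix J J K),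
      f (I ⊕ J) (Matrix.fromBlocks A 0 0 B) = Matrix.fromBlocks (f I A) 0 0 (f J B))
    (n : ℕ) (X H : Matrix (Fin n) (Fin n) K) (hH : H ≠ 0)
    (hder : f (Fin n ⊕ Fin n) (Matrix.fromBlocks X H 0 X) =
      Matrix.fromBlocks (f (Fin n) X) 0 0 (f (Fin n) X)) :
    ∃ (I : Type) (iF : Fintype I) (iD : DecidableEq I) (A B : Matrix I I K),
      A ≠ B ∧ @f I iF iD A = @f I iF iD B :=
  ⟨Fin n ⊕ Fin n, inferInstance, inferInstance,
    Matrix.fromBlocks X H 0 X, Matrix.fromBlocks X 0 0 X,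
    fun h => hH (Matrix.fromBlocks_inj.mp h).2.1, by rw [hder, hsum]⟩

/-- If a free map has vanishing derivative at some `X` in a direction `H ≠ 0`,
then it is not injective. -/
theorem singular_derivative_not_injective (K : Type) [Field K]
    (f : ∀ (I : Type) [Fintype I] [DecidableEq I], Matrix I I K → Matrix I I K)
    (hsum : ∀ (I J : Type) [Fintype I] [DecidableEq I] [Fintype J] [DecidableEq J]
      (A : Matrix I I K) (B : Matrix J J K),
      f (I ⊕ J) (Matrix.fromBlocks A 0 0 B) = Matrix.fromBlocks (f I A) 0 0 (f J B))
    (hsim : ∀ (I : Type) [Fintype I] [DecidableEq I] (S A : Matrix I I K), IsUnit S →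
      f I (S⁻¹ * A * S) = S⁻¹ * f I A * S)
    (n : ℕ) (X H : Matrix (Fin n) (Fin n) K) (hH : H ≠ 0)
    (hder : f (Fin n ⊕ Fin n) (Matrix.fromBlocks X H 0 X) =
      Matrix.fromBlocks (f (Fin n) X) 0 0 (f (Fin n) X)) :
    ∃ (I : Type) (iF : Fintype I) (iD : DecidableEq I) (A B : Matrix I I K),
      A ≠ B ∧ @f I iF iD A = @f I iF iD B :=
  singular_derivative_not_injective_general K f hsum n X H hH hder
end

section
/- Let f be a free map (preserving direct sums and similarities) on all square matrices over a field. If for every matrix X the map H ↦ Df(X)[H] (defined by f([[X,H],[0,X]]) = [[f(X), Df(X)[H]],[0,f(X)]]) is injective, then f is injective: f(X₁) = f(X₂) implies X₁ = X₂ for matrices X₁, X₂ of the same size. -/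
/-!
For `X = diag(X₁, X₂)` and `T = [[0, 1], [0, 0]]`, the commutator `X T - T X` is
`[[0, X₁ - X₂], [0, 0]]`. Conjugating `diag(X, X)` by the unipotent `[[1, T], [0, 1]]` gives
`[[X, X T - T X], [0, X]]`, so a free map sends it to `[[f X, f X T - T f X], [0, f X]]`; hence
`Df(X)[X T - T X] = f X T - T f X`, which vanishes when `f X₁ = f X₂`. Since also `Df(X)[0] = 0`
(the case `T = 0`), injectivity of `Df(X)` forces `X₁ - X₂ = 0`.
-/

open Matrix

namespace Matrix

variable {n R : Type*} [Fintype n] [DecidableEq n] [CommRing R]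

theorem fromBlocks_one_neg_mul_fromBlocks_one (T : Matrix n n R) :
    (fromBlocks 1 (-T) 0 1 * fromBlocks 1 T 0 1 : Matrix (n ⊕ n) (n ⊕ n) R) = 1 := by
  simp [fromBlocks_multiply, fromBlocks_one]

theorem fromBlocks_one_mul_fromBlocks_one_neg (T : Matrix n n R) :
    (fromBlocks 1 T 0 1 * fromBlocks 1 (-T) 0 1 : Matrix (n ⊕ n) (n ⊕ n) R) = 1 := by
  simp [fromBlocks_multiply, fromBlocks_one]

theorem isUnit_fromBlocks_one (T : Matrix n n R) :
    IsUnit (fromBlocks 1 T 0 1 : Matrix (n ⊕ n) (n ⊕ n) R) :=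
  isUnit_iff_exists.mpr
    ⟨_, fromBlocks_one_mul_fromBlocks_one_neg T, fromBlocks_one_neg_mul_fromBlocks_one T⟩

theorem inv_fromBlocks_one (T : Matrix n n R) :
    (fromBlocks 1 T 0 1 : Matrix (n ⊕ n) (n ⊕ n) R)⁻¹ = fromBlocks 1 (-T) 0 1 :=
  inv_eq_left_inv (fromBlocks_one_neg_mul_fromBlocks_one T)

theorem inv_fromBlocks_one_mul_fromBlocks_zero_zero_mul (A T : Matrix n n R) :
    (fromBlocks 1 T 0 1)⁻¹ * fromBlocks A 0 0 A * fromBlocks 1 T 0 1 =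
      fromBlocks A (A * T - T * A) 0 A := by
  simp [inv_fromBlocks_one, fromBlocks_multiply, sub_eq_add_neg]

theorem fromBlocks_mul_fromBlocks_zero_one_sub (A B : Matrix n n R) :
    fromBlocks A 0 0 B * fromBlocks 0 1 0 0 - fromBlocks 0 1 0 0 * fromBlocks A 0 0 B =
      (fromBlocks 0 (A - B) 0 0 : Matrix (n ⊕ n) (n ⊕ n) R) := by
  simp [fromBlocks_multiply, sub_eq_add_neg, fromBlocks_neg, fromBlocks_add]

end Matrix

section FreeMap

variable {K : Type} [CommRing K]
  {f : ∀ (I : Type) [Fintype I] [DecidableEq I], Matrix I I K → Matrix I I K}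

theorem free_map_fromBlocks_commutator
    (hsum : ∀ (I J : Type) [Fintype I] [DecidableEq I] [Fintype J] [DecidableEq J]
      (A : Matrix I I K) (B : Matrix J J K),
      f (I ⊕ J) (fromBlocks A 0 0 B) = fromBlocks (f I A) 0 0 (f J B))
    (hsim : ∀ (I : Type) [Fintype I] [DecidableEq I] (S A : Matrix I I K), IsUnit S →
      f I (S⁻¹ * A * S) = S⁻¹ * f I A * S)
    {I : Type} [Fintype I] [DecidableEq I] (X T : Matrix I I K) :
    f (I ⊕ I) (fromBlocks X (X * T - T * X) 0 X) =
      fromBlocks (f I X) (f I X * T - T * f I X) 0 (f I X) := by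
  rw [← inv_fromBlocks_one_mul_fromBlocks_zero_zero_mul, hsim _ _ _ (isUnit_fromBlocks_one T),
    hsum, inv_fromBlocks_one_mul_fromBlocks_zero_zero_mul]

theorem free_map_derivative_commutator
    {Df : ∀ (I : Type) [Fintype I] [DecidableEq I], Matrix I I K → Matrix I I K → Matrix I I K}
    (hsum : ∀ (I J : Type) [Fintype I] [DecidableEq I] [Fintype J] [DecidableEq J]
      (A : Matrix I I K) (B : Matrix J J K),
      f (I ⊕ J) (fromBlocks A 0 0 B) = fromBlocks (f I A) 0 0 (f J B))
    (hsim : ∀ (I : Type) [Fintype I] [DecidableEq I] (S A : Matrix I I K), IsUnit S →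
      f I (S⁻¹ * A * S) = S⁻¹ * f I A * S)
    (hblock : ∀ (I : Type) [Fintype I] [DecidableEq I] (X H : Matrix I I K),
      f (I ⊕ I) (fromBlocks X H 0 X) = fromBlocks (f I X) (Df I X H) 0 (f I X))
    {I : Type} [Fintype I] [DecidableEq I] (X T : Matrix I I K) :
    Df I X (X * T - T * X) = f I X * T - T * f I X := by
  have h := (hblock I X (X * T - T * X)).symm.trans (free_map_fromBlocks_commutator hsum hsim X T)
  simpa using congrArg toBlocks₁₂ h

end FreeMap

/-- Inverse function theorem, injectivity direction: if the derivative of a free map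
is injective everywhere, the free map is injective. -/
theorem free_inverse_function_theorem_injective (K : Type) [Field K]
    (f : ∀ (I : Type) [Fintype I] [DecidableEq I], Matrix I I K → Matrix I I K)
    (Df : ∀ (I : Type) [Fintype I] [DecidableEq I],
      Matrix I I K → Matrix I I K → Matrix I I K)
    (hsum : ∀ (I J : Type) [Fintype I] [DecidableEq I] [Fintype J] [DecidableEq J]
      (A : Matrix I I K) (B : Matrix J J K),
      f (I ⊕ J) (Matrix.fromBlocks A 0 0 B) = Matrix.fromBlocks (f I A) 0 0 (f J B))
    (hsim : ∀ (I : Type) [Fintype I] [DecidableEq I] (S A : Matrix I I K), IsUnit S →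
      f I (S⁻¹ * A * S) = S⁻¹ * f I A * S)
    (hblock : ∀ (I : Type) [Fintype I] [DecidableEq I] (X H : Matrix I I K),
      f (I ⊕ I) (Matrix.fromBlocks X H 0 X) =
        Matrix.fromBlocks (f I X) (Df I X H) 0 (f I X))
    (hDf : ∀ (I : Type) [Fintype I] [DecidableEq I] (X : Matrix I I K),
      Function.Injective (Df I X)) :
    ∀ (I : Type) [Fintype I] [DecidableEq I] (X₁ X₂ : Matrix I I K),
      f I X₁ = f I X₂ → X₁ = X₂ := by
  intro I _ _ X₁ X₂ hf
  set X : Matrix (I ⊕ I) (I ⊕ I) K := fromBlocks X₁ 0 0 X₂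
  set T : Matrix (I ⊕ I) (I ⊕ I) K := fromBlocks 0 1 0 0
  have hDf_comm := free_map_derivative_commutator hsum hsim hblock X T
  have hDf_zero := free_map_derivative_commutator hsum hsim hblock X 0
  rw [hsum, fromBlocks_mul_fromBlocks_zero_one_sub, fromBlocks_mul_fromBlocks_zero_one_sub, hf,
    sub_self, fromBlocks_zero] at hDf_comm
  simp only [mul_zero, zero_mul, sub_self] at hDf_zero
  have hX : fromBlocks 0 (X₁ - X₂) 0 0 = (0 : Matrix (I ⊕ I) (I ⊕ I) K) :=
    hDf _ X (hDf_comm.trans hDf_zero.symm)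
  rw [← fromBlocks_zero, fromBlocks_inj] at hX
  exact sub_eq_zero.mp hX.2.1
end

section
/- Let X, Y be n×n complex matrices with 4‖X‖ + 2‖Y‖ < 1. Then the linear map (H,K) ↦ (H + HX + XH + [H,Y] + [X,K], K + [H,Y] + [X,K]) on pairs of n×n matrices is injective. -/
open scoped Matrix.Norms.L2Operator

/-! If `(H, K)` is in the kernel, each of `H` and `K` is a sum of products and commutators with
`X` and `Y`. Bounding the smaller of `‖H‖`, `‖K‖` by the larger gives
`max ‖H‖ ‖K‖ ≤ (4‖X‖ + 2‖Y‖) max ‖H‖ ‖K‖`, which forces `(H, K) = 0`. -/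

section NonUnitalNormedRing

variable {A : Type*} [NonUnitalNormedRing A]

theorem norm_commutator_le (a b : A) : ‖a * b - b * a‖ ≤ 2 * ‖a‖ * ‖b‖ :=
  calc ‖a * b - b * a‖ ≤ ‖a * b‖ + ‖b * a‖ := norm_sub_le _ _
    _ ≤ ‖a‖ * ‖b‖ + ‖b‖ * ‖a‖ := add_le_add (norm_mul_le _ _) (norm_mul_le _ _)
    _ = 2 * ‖a‖ * ‖b‖ := by ring

/-- The derivative at `(X, Y)` of `(X, Y) ↦ (X + X² + [X, Y], Y + [X, Y])`. -/
def exoticQuadraticDeriv (X Y : A) : A × A →+ A × A where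
  toFun p := (p.1 + p.1 * X + X * p.1 + (p.1 * Y - Y * p.1) + (X * p.2 - p.2 * X),
    p.2 + (p.1 * Y - Y * p.1) + (X * p.2 - p.2 * X))
  map_zero' := by simp
  map_add' p q := by
    simp only [Prod.fst_add, Prod.snd_add, Prod.mk_add_mk, add_mul, mul_add]
    congr 1 <;> abel

variable {X Y H K : A}

theorem norm_snd_le_of_exoticQuadraticDeriv_eq_zero
    (hK : K + (H * Y - Y * H) + (X * K - K * X) = 0) :
    ‖K‖ ≤ 2 * ‖Y‖ * ‖H‖ + 2 * ‖X‖ * ‖K‖ :=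
  calc ‖K‖ = ‖-(H * Y - Y * H) - (X * K - K * X)‖ := by
        congr 1; rw [← sub_eq_zero, ← hK]; abel
    _ ≤ ‖H * Y - Y * H‖ + ‖X * K - K * X‖ := by
        rw [← norm_neg (H * Y - Y * H)]; exact norm_sub_le _ _
    _ ≤ 2 * ‖H‖ * ‖Y‖ + 2 * ‖X‖ * ‖K‖ :=
        add_le_add (norm_commutator_le _ _) (norm_commutator_le _ _)
    _ = 2 * ‖Y‖ * ‖H‖ + 2 * ‖X‖ * ‖K‖ := by ring

theorem norm_fst_le_of_exoticQuadraticDeriv_eq_zero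
    (hH : H + H * X + X * H + (H * Y - Y * H) + (X * K - K * X) = 0) :
    ‖H‖ ≤ 2 * ‖X‖ * ‖H‖ + 2 * ‖Y‖ * ‖H‖ + 2 * ‖X‖ * ‖K‖ :=
  calc ‖H‖ = ‖-(H * X + X * H) - (H * Y - Y * H) - (X * K - K * X)‖ := by
        congr 1; rw [← sub_eq_zero, ← hH]; abel
    _ ≤ ‖H * X + X * H‖ + ‖H * Y - Y * H‖ + ‖X * K - K * X‖ := by
        rw [← norm_neg (H * X + X * H)]
        exact (norm_sub_le _ _).trans (add_le_add_left (norm_sub_le _ _) _)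
    _ ≤ (‖H‖ * ‖X‖ + ‖X‖ * ‖H‖) + 2 * ‖H‖ * ‖Y‖ + 2 * ‖X‖ * ‖K‖ := by
        gcongr
        · exact (norm_add_le _ _).trans (add_le_add (norm_mul_le _ _) (norm_mul_le _ _))
        · exact norm_commutator_le _ _
        · exact norm_commutator_le _ _
    _ = 2 * ‖X‖ * ‖H‖ + 2 * ‖Y‖ * ‖H‖ + 2 * ‖X‖ * ‖K‖ := by ring

theorem norm_le_mul_norm_of_exoticQuadraticDeriv_eq_zero {p : A × A}
    (hp : exoticQuadraticDeriv X Y p = 0) : ‖p‖ ≤ (4 * ‖X‖ + 2 * ‖Y‖) * ‖p‖ := by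
  obtain ⟨hH, hK⟩ := Prod.mk_eq_zero.mp hp
  have bK := norm_snd_le_of_exoticQuadraticDeriv_eq_zero hK
  have bH := norm_fst_le_of_exoticQuadraticDeriv_eq_zero hH
  have hX := norm_nonneg X
  rw [Prod.norm_def]
  rcases le_total ‖p.2‖ ‖p.1‖ with hle | hle
  · rw [max_eq_left hle]
    nlinarith [mul_le_mul_of_nonneg_left hle hX]
  · rw [max_eq_right hle]
    nlinarith [mul_le_mul_of_nonneg_left hle (norm_nonneg Y), mul_nonneg hX (norm_nonneg p.2)]

theorem exoticQuadraticDeriv_injective (h : 4 * ‖X‖ + 2 * ‖Y‖ < 1) :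
    Function.Injective (exoticQuadraticDeriv X Y) := by
  refine (injective_iff_map_eq_zero _).mpr fun p hp => norm_le_zero_iff.mp ?_
  nlinarith [norm_le_mul_norm_of_exoticQuadraticDeriv_eq_zero hp, norm_nonneg p]

end NonUnitalNormedRing

/-- If `4‖X‖ + 2‖Y‖ < 1` then the derivative of `f(X,Y) = (X + X² + [X,Y], Y + [X,Y])`
is injective. -/
theorem exotic_quadratic_derivative_injective (n : ℕ) (X Y : Matrix (Fin n) (Fin n) ℂ)
    (h : 4 * ‖X‖ + 2 * ‖Y‖ < 1) :
    Function.Injective (fun p : Matrix (Fin n) (Fin n) ℂ × Matrix (Fin n) (Fin n) ℂ =>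
      (p.1 + p.1 * X + X * p.1 + (p.1 * Y - Y * p.1) + (X * p.2 - p.2 * X),
       p.2 + (p.1 * Y - Y * p.1) + (X * p.2 - p.2 * X))) :=
  exoticQuadraticDeriv_injective h
end
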